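/- arXiv:1811.00636 — 3 statements merged into one kernel-verified Lean document; each statement's English description precedes it below -/
import Mathlib

section
/- Let 0 ≤ ε ≤ 1. Let D and W be Borel probability measures on ℝ^d with finite second moments and means μ_D and μ_W, let Δ = μ_D − μ_W, and let Σ_F be the covariance matrix of the mixture F = (1−ε)D + εW. Then the largest eigenvalue of Σ_F is at least ε(1−ε)‖Δ‖₂²; equivalently, max_{‖u‖₂=1} uᵀΣ_F u ≥ ε(1−ε)‖Δ‖₂². -/
open MeasureTheory RealInnerProductSpace

/-!
Project the mixture onto a direction `u`. The quadratic form `uᵀ Σ_F u` is the second moment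
of `⟪u, x - μ_F⟫` under `F`, which splits as `(1 - ε)` times its `D`-moment plus `ε` times its
`W`-moment. Each of these dominates the square of the corresponding mean,
`⟪u, μ_D - μ_F⟫ = ε ⟪u, Δ⟫` and `⟪u, μ_W - μ_F⟫ = -(1 - ε) ⟪u, Δ⟫`, so
`uᵀ Σ_F u ≥ ε (1 - ε) ⟪u, Δ⟫²`; take `u = Δ / ‖Δ‖`.
-/

theorem memLp_two_add_measure {α E : Type*} [MeasurableSpace α] [NormedAddCommGroup E]
    {f : α → E} {μ ν : Measure α} (hμ : MemLp f 2 μ) (hν : MemLp f 2 ν) :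
    MemLp f 2 (μ + ν) := by
  rw [memLp_two_iff_integrable_sq_norm (hμ.1.add_measure hν.1), integrable_add_measure]
  exact ⟨(memLp_two_iff_integrable_sq_norm hμ.1).1 hμ,
    (memLp_two_iff_integrable_sq_norm hν.1).1 hν⟩

theorem integral_ofReal_smul_add_ofReal_smul {α : Type*} [MeasurableSpace α]
    {μ ν : Measure α} {f : α → ℝ} (hμ : Integrable f μ) (hν : Integrable f ν)
    {a b : ℝ} (ha : 0 ≤ a) (hb : 0 ≤ b) :
    ∫ x, f x ∂(ENNReal.ofReal a • μ + ENNReal.ofReal b • ν) =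
      a * ∫ x, f x ∂μ + b * ∫ x, f x ∂ν := by
  rw [integral_add_measure (hμ.smul_measure ENNReal.ofReal_ne_top)
      (hν.smul_measure ENNReal.ofReal_ne_top), integral_smul_measure, integral_smul_measure,
    ENNReal.toReal_ofReal ha, ENNReal.toReal_ofReal hb, smul_eq_mul, smul_eq_mul]

section InnerProductSpace

variable {E : Type*} [NormedAddCommGroup E] [InnerProductSpace ℝ E] [MeasurableSpace E]

theorem MeasureTheory.MemLp.inner_sub_const {ν : Measure E} [IsFiniteMeasure ν]
    (h : MemLp id 2 ν) (u m : E) : MemLp (fun x => ⟪u, x - m⟫) 2 ν :=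
  (h.sub (memLp_const m)).const_inner u

theorem sq_inner_integral_sub_le [CompleteSpace E] {ν : Measure E} [IsProbabilityMeasure ν]
    (h : MemLp id 2 ν) (u m : E) : ⟪u, (∫ x, x ∂ν) - m⟫ ^ 2 ≤ ∫ x, ⟪u, x - m⟫ ^ 2 ∂ν := by
  have hint : Integrable (fun x => x) ν := h.integrable one_le_two
  have hmean : ∫ x, ⟪u, x - m⟫ ∂ν = ⟪u, (∫ x, x ∂ν) - m⟫ := by
    rw [integral_inner (f := fun x => x - m) (hint.sub (integrable_const m)),
      integral_sub hint (integrable_const m), integral_const, probReal_univ, one_smul]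
  have hvar := ProbabilityTheory.variance_nonneg (fun x => ⟪u, x - m⟫) ν
  rw [ProbabilityTheory.variance_eq_sub (h.inner_sub_const u m), hmean] at hvar
  simp only [Pi.pow_apply, sub_nonneg] at hvar
  exact hvar

end InnerProductSpace

section Euclidean

variable {ι : Type*} [Fintype ι]

theorem inner_sub_sq_eq_sum_sum (u x m : EuclideanSpace ℝ ι) :
    ⟪u, x - m⟫ ^ 2 = ∑ i, ∑ j, u i * ((x i - m i) * (x j - m j)) * u j := by
  simp only [PiLp.inner_apply, PiLp.sub_apply, RCLike.inner_apply, conj_trivial, sq,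
    Finset.sum_mul_sum]
  exact Finset.sum_congr rfl fun i _ => Finset.sum_congr rfl fun j _ => by ring

theorem sum_sum_mul_covariance_mul_eq_integral {ν : Measure (EuclideanSpace ℝ ι)}
    {m : EuclideanSpace ℝ ι} (h : MemLp (fun x => x - m) 2 ν) (u : EuclideanSpace ℝ ι) :
    ∑ i, ∑ j, u i * (Matrix.of fun i j => ∫ x, (x i - m i) * (x j - m j) ∂ν) i j * u j =
      ∫ x, ⟪u, x - m⟫ ^ 2 ∂ν := by
  have hcoord (i : ι) : MemLp (fun x : EuclideanSpace ℝ ι => x i - m i) 2 ν :=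
    (EuclideanSpace.proj (𝕜 := ℝ) i).comp_memLp' h
  have hprod (i j : ι) :
      Integrable (fun x => u i * ((x i - m i) * (x j - m j)) * u j) ν :=
    ((memLp_one_iff_integrable.1 ((hcoord j).smul (r := 1) (hcoord i))).const_mul _).mul_const _
  simp_rw [inner_sub_sq_eq_sum_sum, Matrix.of_apply]
  rw [integral_finsetSum _ fun i _ => integrable_finsetSum _ fun j _ => hprod i j]
  refine Finset.sum_congr rfl fun i _ => ?_
  rw [integral_finsetSum _ fun j _ => hprod i j]
  exact Finset.sum_congr rfl fun j _ => by rw [integral_mul_const, integral_const_mul]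

theorem bddAbove_rayleigh (M : Matrix ι ι ℝ) :
    BddAbove {r : ℝ | ∃ u : EuclideanSpace ℝ ι, ‖u‖ = 1 ∧ r = ∑ i, ∑ j, u i * M i j * u j} := by
  have hcont : Continuous fun u : EuclideanSpace ℝ ι => ∑ i, ∑ j, u i * M i j * u j := by
    fun_prop
  have hsphere :
      {r : ℝ | ∃ u : EuclideanSpace ℝ ι, ‖u‖ = 1 ∧ r = ∑ i, ∑ j, u i * M i j * u j} =
      (fun u : EuclideanSpace ℝ ι => ∑ i, ∑ j, u i * M i j * u j) '' Metric.sphere 0 1 := by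
    ext r
    simp [eq_comm]
  rw [hsphere]
  exact (isCompact_sphere 0 1).bddAbove_image hcont.continuousOn

theorem mul_sq_norm_le_sSup_rayleigh (M : Matrix ι ι ℝ) (c : ℝ) (v : EuclideanSpace ℝ ι)
    (h : ∀ u : EuclideanSpace ℝ ι, c * ⟪u, v⟫ ^ 2 ≤ ∑ i, ∑ j, u i * M i j * u j) :
    c * ‖v‖ ^ 2 ≤
      sSup {r : ℝ | ∃ u : EuclideanSpace ℝ ι, ‖u‖ = 1 ∧ r = ∑ i, ∑ j, u i * M i j * u j} := by
  rcases eq_or_ne v 0 with rfl | hv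
  · rw [norm_zero, zero_pow two_ne_zero, mul_zero]
    refine Real.sSup_nonneg fun r ⟨u, _, hr⟩ => ?_
    simpa [hr] using h u
  · have hv' : ‖v‖ ≠ 0 := norm_ne_zero_iff.2 hv
    have hunit : ‖‖v‖⁻¹ • v‖ = 1 := by
      rw [norm_smul, norm_inv, norm_norm, inv_mul_cancel₀ hv']
    have hinner : ⟪‖v‖⁻¹ • v, v⟫ = ‖v‖ := by
      rw [real_inner_smul_left, real_inner_self_eq_norm_sq]
      field_simp
    calc c * ‖v‖ ^ 2 ≤ ∑ i, ∑ j, (‖v‖⁻¹ • v) i * M i j * (‖v‖⁻¹ • v) j := by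
          simpa only [hinner] using h (‖v‖⁻¹ • v)
      _ ≤ _ := le_csSup (bddAbove_rayleigh M) ⟨_, hunit, rfl⟩

end Euclidean

/-- The spectral signature: the largest eigenvalue of the mixture covariance `ΣF`,
i.e. the maximal Rayleigh quotient `max_{‖u‖=1} uᵀΣF u`, is at least `ε(1−ε)‖Δ‖²`. -/
theorem mixture_covariance_top_eigenvalue_lower_bound {d : ℕ} (ε : ℝ)
    (hε0 : 0 ≤ ε) (hε1 : ε ≤ 1)
    (D W : Measure (EuclideanSpace ℝ (Fin d)))
    [IsProbabilityMeasure D] [IsProbabilityMeasure W]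
    (hD2 : MemLp (id : EuclideanSpace ℝ (Fin d) → EuclideanSpace ℝ (Fin d)) 2 D)
    (hW2 : MemLp (id : EuclideanSpace ℝ (Fin d) → EuclideanSpace ℝ (Fin d)) 2 W)
    (μD μW : EuclideanSpace ℝ (Fin d))
    (hμD : μD = (∫ x, x ∂D)) (hμW : μW = (∫ x, x ∂W))
    (Δ : EuclideanSpace ℝ (Fin d)) (hΔ : Δ = μD - μW)
    (F : Measure (EuclideanSpace ℝ (Fin d)))
    (hF : F = ENNReal.ofReal (1 - ε) • D + ENNReal.ofReal ε • W)
    (μF : EuclideanSpace ℝ (Fin d)) (hμF : μF = (1 - ε) • μD + ε • μW)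
    (SigmaF : Matrix (Fin d) (Fin d) ℝ)
    (hSigmaF : SigmaF = Matrix.of fun i j => ∫ x, (x i - μF i) * (x j - μF j) ∂F) :
    ε * (1 - ε) * ‖Δ‖ ^ 2 ≤
      sSup {r : ℝ | ∃ u : EuclideanSpace ℝ (Fin d),
        ‖u‖ = 1 ∧ r = ∑ i, ∑ j, u i * SigmaF i j * u j} := by
  have hε1' : 0 ≤ 1 - ε := sub_nonneg.2 hε1
  have hDF : μD - μF = ε • Δ := by rw [hμF, hΔ]; module
  have hWF : μW - μF = -(1 - ε) • Δ := by rw [hμF, hΔ]; module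
  have hF2 : MemLp (fun x => x - μF) 2 F := by
    rw [hF]
    exact memLp_two_add_measure
      ((hD2.sub (memLp_const μF)).smul_measure ENNReal.ofReal_ne_top)
      ((hW2.sub (memLp_const μF)).smul_measure ENNReal.ofReal_ne_top)
  subst hSigmaF
  refine mul_sq_norm_le_sSup_rayleigh _ _ Δ fun u => ?_
  calc ε * (1 - ε) * ⟪u, Δ⟫ ^ 2
      = (1 - ε) * ⟪u, μD - μF⟫ ^ 2 + ε * ⟪u, μW - μF⟫ ^ 2 := by
        rw [hDF, hWF, real_inner_smul_right, real_inner_smul_right]; ring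
    _ ≤ (1 - ε) * ∫ x, ⟪u, x - μF⟫ ^ 2 ∂D + ε * ∫ x, ⟪u, x - μF⟫ ^ 2 ∂W := by
        rw [hμD, hμW]
        gcongr
        exacts [sq_inner_integral_sub_le hD2 u μF, sq_inner_integral_sub_le hW2 u μF]
    _ = ∫ x, ⟪u, x - μF⟫ ^ 2 ∂F := by
        rw [hF, integral_ofReal_smul_add_ofReal_smul
          (hD2.inner_sub_const u μF).integrable_sq (hW2.inner_sub_const u μF).integrable_sq
          hε1' hε0]
    _ = _ := (sum_sum_mul_covariance_mul_eq_integral hF2 u).symm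
end

section
/- Let 0 < ε < 1 and σ ≥ 0. Let D and W be Borel probability measures on ℝ^d with finite second moments, means μ_D and μ_W, and suppose that for every unit vector u one has E_{X∼D}[⟨X−μ_D,u⟩²] ≤ σ² and E_{X∼W}[⟨X−μ_W,u⟩²] ≤ σ². Let Δ = μ_D − μ_W, let Σ_F be the covariance matrix of the mixture F = (1−ε)D + εW, and let v be a unit vector attaining vᵀΣ_F v = max_{‖u‖₂=1} uᵀΣ_F u. Then ⟨v,Δ⟩² ≥ ‖Δ‖₂² − σ²/(ε(1−ε)). -/
/-! The covariance form of the mixture obeys the law of total variance: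
`uᵀ Σ_F u = (1 - ε) Var_D ⟪·, u⟫ + ε Var_W ⟪·, u⟫ + ε (1 - ε) ⟪Δ, u⟫²`.
Hence on unit vectors `ε (1 - ε) ⟪Δ, u⟫² ≤ uᵀ Σ_F u ≤ σ² + ε (1 - ε) ⟪Δ, u⟫²`, and comparing the
lower bound at `u = Δ / ‖Δ‖` with the upper bound at the maximiser `v` gives
`ε (1 - ε) ‖Δ‖² ≤ σ² + ε (1 - ε) ⟪Δ, v⟫²`. -/

open MeasureTheory ProbabilityTheory RealInnerProductSpace

section Moments

variable {α : Type*} [MeasurableSpace α]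

theorem integral_add_smul_measure_ofReal {G : Type*} [NormedAddCommGroup G] [NormedSpace ℝ G]
    {D W : Measure α} {f : α → G} (hD : Integrable f D) (hW : Integrable f W) {a b : ℝ}
    (ha : 0 ≤ a) (hb : 0 ≤ b) :
    ∫ x, f x ∂(ENNReal.ofReal a • D + ENNReal.ofReal b • W)
      = a • ∫ x, f x ∂D + b • ∫ x, f x ∂W := by
  rw [integral_add_measure (hD.smul_measure ENNReal.ofReal_ne_top)
      (hW.smul_measure ENNReal.ofReal_ne_top), integral_smul_measure, integral_smul_measure,
    ENNReal.toReal_ofReal ha, ENNReal.toReal_ofReal hb]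

theorem MeasureTheory.MemLp.integrable_apply_mul_apply {ι : Type*} [Fintype ι] {μ : Measure α}
    {f : α → EuclideanSpace ℝ ι} (hf : MemLp f 2 μ) (i j : ι) :
    Integrable (fun x => f x i * f x j) μ :=
  have hcoord (k : ι) : MemLp (fun x => f x k) 2 μ :=
    (EuclideanSpace.proj (𝕜 := ℝ) k).comp_memLp' hf
  (hcoord i).integrable_mul (hcoord j)

theorem sum_sum_mul_integral_mul_mul_eq_integral_inner_sq {ι : Type*} [Fintype ι] {μ : Measure α}
    {f : α → EuclideanSpace ℝ ι} (hf : ∀ i j, Integrable (fun x => f x i * f x j) μ)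
    (u : EuclideanSpace ℝ ι) :
    ∑ i, ∑ j, u i * (∫ x, f x i * f x j ∂μ) * u j = ∫ x, ⟪f x, u⟫ ^ 2 ∂μ := by
  have hterm : ∀ i j, Integrable (fun x => u i * (f x i * f x j) * u j) μ :=
    fun i j => ((hf i j).const_mul _).mul_const _
  calc ∑ i, ∑ j, u i * (∫ x, f x i * f x j ∂μ) * u j
      = ∑ i, ∑ j, ∫ x, u i * (f x i * f x j) * u j ∂μ := by
        simp only [integral_mul_const, integral_const_mul]
    _ = ∫ x, ∑ i, ∑ j, u i * (f x i * f x j) * u j ∂μ := by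
        rw [integral_finsetSum _ fun i _ => integrable_finsetSum _ fun j _ => hterm i j]
        simp only [integral_finsetSum _ fun j _ => hterm _ j]
    _ = ∫ x, ⟪f x, u⟫ ^ 2 ∂μ := by
        congr 1 with x
        simp only [PiLp.inner_apply, RCLike.inner_apply, conj_trivial, sq, Finset.sum_mul_sum]
        exact Finset.sum_congr rfl fun i _ => Finset.sum_congr rfl fun j _ => by ring

variable {E : Type*} [NormedAddCommGroup E] [InnerProductSpace ℝ E] [CompleteSpace E]

theorem integral_inner_sub_sq {μ : Measure α} [IsProbabilityMeasure μ] {X : α → E}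
    (hX : MemLp X 2 μ) (c u : E) :
    ∫ x, ⟪X x - c, u⟫ ^ 2 ∂μ = ∫ x, ⟪X x - μ[X], u⟫ ^ 2 ∂μ + ⟪μ[X] - c, u⟫ ^ 2 := by
  set Y : α → ℝ := fun x => ⟪X x - c, u⟫
  have hY : MemLp Y 2 μ := (hX.sub (memLp_const c)).inner_const u
  have hmean : μ[Y] = ⟪μ[X] - c, u⟫ := by
    have hXi := hX.integrable one_le_two
    simp only [Y, inner_sub_left]
    rw [integral_sub (hXi.inner_const u) (integrable_const _), integral_const,
      real_inner_comm u (∫ x, X x ∂μ), ← integral_inner hXi]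
    simp [real_inner_comm]
  calc ∫ x, Y x ^ 2 ∂μ = Var[Y; μ] + μ[Y] ^ 2 := by rw [variance_eq_sub hY]; simp
    _ = ∫ x, ⟪X x - μ[X], u⟫ ^ 2 ∂μ + ⟪μ[X] - c, u⟫ ^ 2 := by
        rw [variance_eq_integral hY.aemeasurable, hmean]
        congr 2 with x
        simp only [Y, ← inner_sub_left, sub_sub_sub_cancel_right]

theorem integral_inner_sub_sq_mixture {D W : Measure α} [IsProbabilityMeasure D]
    [IsProbabilityMeasure W] {X : α → E} (hD : MemLp X 2 D) (hW : MemLp X 2 W) {ε : ℝ}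
    (hε0 : 0 ≤ ε) (hε1 : ε ≤ 1) (u : E) :
    ∫ x, ⟪X x - ((1 - ε) • D[X] + ε • W[X]), u⟫ ^ 2
        ∂(ENNReal.ofReal (1 - ε) • D + ENNReal.ofReal ε • W)
      = (1 - ε) * ∫ x, ⟪X x - D[X], u⟫ ^ 2 ∂D + ε * ∫ x, ⟪X x - W[X], u⟫ ^ 2 ∂W
        + ε * (1 - ε) * ⟪D[X] - W[X], u⟫ ^ 2 := by
  set m := (1 - ε) • D[X] + ε • W[X]
  have hsq {ν : Measure α} [IsFiniteMeasure ν] (h : MemLp X 2 ν) :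
      Integrable (fun x => ⟪X x - m, u⟫ ^ 2) ν :=
    ((h.sub (memLp_const m)).inner_const u).integrable_sq
  have hDm : D[X] - m = ε • (D[X] - W[X]) := by module
  have hWm : W[X] - m = (-(1 - ε)) • (D[X] - W[X]) := by module
  rw [integral_add_smul_measure_ofReal (hsq hD) (hsq hW) (sub_nonneg.2 hε1) hε0,
    integral_inner_sub_sq hD, integral_inner_sub_sq hW, hDm, hWm, real_inner_smul_left,
    real_inner_smul_left, smul_eq_mul, smul_eq_mul]
  ring

end Moments

theorem mul_norm_sq_le_of_forall_norm_eq_one_le {F : Type*} [NormedAddCommGroup F]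
    [InnerProductSpace ℝ F] {Q : F → ℝ} {c s : ℝ} {Δ v : F} (hv : ‖v‖ = 1)
    (hmax : ∀ u, ‖u‖ = 1 → Q u ≤ Q v) (hlower : ∀ u, ‖u‖ = 1 → c * ⟪Δ, u⟫ ^ 2 ≤ Q u)
    (hupper : Q v ≤ s + c * ⟪Δ, v⟫ ^ 2) :
    c * ‖Δ‖ ^ 2 ≤ s + c * ⟪Δ, v⟫ ^ 2 := by
  rcases eq_or_ne Δ 0 with rfl | hΔ
  · simpa using (hlower v hv).trans hupper
  set u := ‖Δ‖⁻¹ • Δ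
  have hu : ‖u‖ = 1 := norm_smul_inv_norm hΔ
  have hΔu : ⟪Δ, u⟫ = ‖Δ‖ := by
    rw [real_inner_smul_right, real_inner_self_eq_norm_sq]
    field_simp
  calc c * ‖Δ‖ ^ 2 = c * ⟪Δ, u⟫ ^ 2 := by rw [hΔu]
    _ ≤ Q u := hlower u hu
    _ ≤ Q v := hmax u hu
    _ ≤ s + c * ⟪Δ, v⟫ ^ 2 := hupper

theorem top_eigenvector_correlation_quantitative_general {d : ℕ} (ε σ : ℝ)
    (hε0 : 0 < ε) (hε1 : ε < 1)
    (D W : Measure (EuclideanSpace ℝ (Fin d)))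
    [IsProbabilityMeasure D] [IsProbabilityMeasure W]
    (hD2 : MemLp (id : EuclideanSpace ℝ (Fin d) → EuclideanSpace ℝ (Fin d)) 2 D)
    (hW2 : MemLp (id : EuclideanSpace ℝ (Fin d) → EuclideanSpace ℝ (Fin d)) 2 W)
    (μD μW : EuclideanSpace ℝ (Fin d))
    (hμD : μD = (∫ x, x ∂D)) (hμW : μW = (∫ x, x ∂W))
    (hDcov : ∀ u : EuclideanSpace ℝ (Fin d), ‖u‖ = 1 →
      ∫ x, ⟪x - μD, u⟫ ^ 2 ∂D ≤ σ ^ 2)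
    (hWcov : ∀ u : EuclideanSpace ℝ (Fin d), ‖u‖ = 1 →
      ∫ x, ⟪x - μW, u⟫ ^ 2 ∂W ≤ σ ^ 2)
    (Δ : EuclideanSpace ℝ (Fin d)) (hΔ : Δ = μD - μW)
    (F : Measure (EuclideanSpace ℝ (Fin d)))
    (hF : F = ENNReal.ofReal (1 - ε) • D + ENNReal.ofReal ε • W)
    (μF : EuclideanSpace ℝ (Fin d)) (hμF : μF = (1 - ε) • μD + ε • μW)
    (SigmaF : Matrix (Fin d) (Fin d) ℝ)
    (hSigmaF : SigmaF = Matrix.of fun i j => ∫ x, (x i - μF i) * (x j - μF j) ∂F)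
    (v : EuclideanSpace ℝ (Fin d)) (hv : ‖v‖ = 1)
    (hvmax : ∀ u : EuclideanSpace ℝ (Fin d), ‖u‖ = 1 →
      ∑ i, ∑ j, u i * SigmaF i j * u j ≤ ∑ i, ∑ j, v i * SigmaF i j * v j) :
    ⟪v, Δ⟫ ^ 2 ≥ ‖Δ‖ ^ 2 - σ ^ 2 / (ε * (1 - ε)) := by
  have hc : 0 < ε * (1 - ε) := mul_pos hε0 (sub_pos.2 hε1)
  have hQ (u : EuclideanSpace ℝ (Fin d)) : ∑ i, ∑ j, u i * SigmaF i j * u j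
      = (1 - ε) * ∫ x, ⟪x - μD, u⟫ ^ 2 ∂D + ε * ∫ x, ⟪x - μW, u⟫ ^ 2 ∂W
        + ε * (1 - ε) * ⟪Δ, u⟫ ^ 2 := by
    have hint (i j : Fin d) : Integrable (fun x => (x - μF) i * (x - μF) j) F := by
      rw [hF]
      exact (((hD2.sub (memLp_const μF)).integrable_apply_mul_apply i j).smul_measure
        ENNReal.ofReal_ne_top).add_measure
        (((hW2.sub (memLp_const μF)).integrable_apply_mul_apply i j).smul_measure
          ENNReal.ofReal_ne_top)
    rw [hSigmaF]
    refine (sum_sum_mul_integral_mul_mul_eq_integral_inner_sq hint u).trans ?_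
    rw [hF, hμF, hΔ, hμD, hμW]
    exact integral_inner_sub_sq_mixture hD2 hW2 hε0.le hε1.le u
  have hlower (u : EuclideanSpace ℝ (Fin d)) (_ : ‖u‖ = 1) :
      ε * (1 - ε) * ⟪Δ, u⟫ ^ 2 ≤ ∑ i, ∑ j, u i * SigmaF i j * u j := by
    have hD : 0 ≤ ∫ x, ⟪x - μD, u⟫ ^ 2 ∂D := integral_nonneg fun x => sq_nonneg _
    have hW : 0 ≤ ∫ x, ⟪x - μW, u⟫ ^ 2 ∂W := integral_nonneg fun x => sq_nonneg _
    rw [hQ]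
    nlinarith
  have hupper : ∑ i, ∑ j, v i * SigmaF i j * v j ≤ σ ^ 2 + ε * (1 - ε) * ⟪Δ, v⟫ ^ 2 := by
    rw [hQ]
    nlinarith [hDcov v hv, hWcov v hv]
  have hbound := mul_norm_sq_le_of_forall_norm_eq_one_le hv hvmax hlower hupper
  have : ‖Δ‖ ^ 2 - ⟪Δ, v⟫ ^ 2 ≤ σ ^ 2 / (ε * (1 - ε)) := by
    rw [le_div_iff₀ hc]
    linarith
  rw [real_inner_comm]
  linarith

/-- Quantitative correlation of the top eigenvector of the mixture covariance with the mean
shift: `⟨v,Δ⟩² ≥ ‖Δ‖² − σ²/(ε(1−ε))`. -/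
theorem top_eigenvector_correlation_quantitative {d : ℕ} (ε σ : ℝ)
    (hε0 : 0 < ε) (hε1 : ε < 1) (hσ : 0 ≤ σ)
    (D W : Measure (EuclideanSpace ℝ (Fin d)))
    [IsProbabilityMeasure D] [IsProbabilityMeasure W]
    (hD2 : MemLp (id : EuclideanSpace ℝ (Fin d) → EuclideanSpace ℝ (Fin d)) 2 D)
    (hW2 : MemLp (id : EuclideanSpace ℝ (Fin d) → EuclideanSpace ℝ (Fin d)) 2 W)
    (μD μW : EuclideanSpace ℝ (Fin d))
    (hμD : μD = (∫ x, x ∂D)) (hμW : μW = (∫ x, x ∂W))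
    (hDcov : ∀ u : EuclideanSpace ℝ (Fin d), ‖u‖ = 1 →
      ∫ x, ⟪x - μD, u⟫ ^ 2 ∂D ≤ σ ^ 2)
    (hWcov : ∀ u : EuclideanSpace ℝ (Fin d), ‖u‖ = 1 →
      ∫ x, ⟪x - μW, u⟫ ^ 2 ∂W ≤ σ ^ 2)
    (Δ : EuclideanSpace ℝ (Fin d)) (hΔ : Δ = μD - μW)
    (F : Measure (EuclideanSpace ℝ (Fin d)))
    (hF : F = ENNReal.ofReal (1 - ε) • D + ENNReal.ofReal ε • W)
    (μF : EuclideanSpace ℝ (Fin d)) (hμF : μF = (1 - ε) • μD + ε • μW)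
    (SigmaF : Matrix (Fin d) (Fin d) ℝ)
    (hSigmaF : SigmaF = Matrix.of fun i j => ∫ x, (x i - μF i) * (x j - μF j) ∂F)
    (v : EuclideanSpace ℝ (Fin d)) (hv : ‖v‖ = 1)
    (hvmax : ∀ u : EuclideanSpace ℝ (Fin d), ‖u‖ = 1 →
      ∑ i, ∑ j, u i * SigmaF i j * u j ≤ ∑ i, ∑ j, v i * SigmaF i j * v j) :
    ⟪v, Δ⟫ ^ 2 ≥ ‖Δ‖ ^ 2 - σ ^ 2 / (ε * (1 - ε)) :=
  top_eigenvector_correlation_quantitative_general ε σ hε0 hε1 D W hD2 hW2 μD μW hμD hμW hDcov hWcov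
    Δ hΔ F hF μF hμF SigmaF hSigmaF v hv hvmax
end

section
/- Let 0 < ε < 1/2, σ > 0, and α > 0 with (1−2ε)α > 1. Let D and W be Borel probability measures on ℝ^d with finite second moments and means μ_D and μ_W, and suppose that for every unit vector u one has E_{X∼W}[⟨X−μ_W,u⟩²] ≤ σ². Let Δ = μ_D − μ_W and μ_F = (1−ε)μ_D + εμ_W. If u is a unit vector with |⟨u,Δ⟩| ≥ α·σ/√ε, then, setting t = ε|⟨Δ,u⟩| + σ/√ε, one has Pr_{X∼W}[|⟨X−μ_F,u⟩| < t] ≤ ε/((1−2ε)α − 1)². -/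
/-!
Since `μF - μW = (1 - ε) Δ`, a point whose projection lies within `t = ε|⟨Δ,u⟩| + σ/√ε` of
`μF` has projection at distance more than `s = (1 - 2ε)|⟨Δ,u⟩| - σ/√ε` from `μW`. The
assumption on `|⟨u,Δ⟩|` gives `s ≥ ((1 - 2ε)α - 1) σ/√ε > 0`, and Chebyshev's inequality for
`⟨X - μW, u⟩`, whose second moment is at most `σ²`, bounds the probability by
`σ²/s² ≤ ε/((1 - 2ε)α - 1)²`.
-/

open MeasureTheory RealInnerProductSpace

theorem meas_ge_le_integral_sq_div_sq {α : Type*} [MeasurableSpace α]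
    {μ : Measure α} [IsFiniteMeasure μ] {f : α → ℝ} (hf : Integrable (fun x => f x ^ 2) μ)
    {s : ℝ} (hs : 0 < s) :
    μ {x | s ≤ |f x|} ≤ ENNReal.ofReal ((∫ x, f x ^ 2 ∂μ) / s ^ 2) := by
  have hset : {x | s ≤ |f x|} = {x | s ^ 2 ≤ f x ^ 2} := by
    ext x
    simp only [Set.mem_ofPred_eq, sq_le_sq, abs_of_pos hs]
  have markov := mul_meas_ge_le_integral_of_nonneg
    (ae_of_all μ fun x => sq_nonneg (f x)) hf (s ^ 2)
  rw [hset, ← ofReal_measureReal]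
  exact ENNReal.ofReal_le_ofReal ((le_div_iff₀' (by positivity)).mpr markov)

theorem inner_sub_convexCombination_eq {E : Type*} [NormedAddCommGroup E]
    [InnerProductSpace ℝ E] (ε : ℝ) (x a b u : E) :
    ⟪x - ((1 - ε) • a + ε • b), u⟫ = ⟪x - b, u⟫ - (1 - ε) * ⟪a - b, u⟫ := by
  rw [← real_inner_smul_left, ← inner_sub_left]
  congr 1
  module

theorem sub_lt_abs_of_abs_sub_mul_lt {ε r q c : ℝ} (hε : ε ≤ 1)
    (h : |q - (1 - ε) * c| < ε * |c| + r) : (1 - 2 * ε) * |c| - r < |q| := by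
  have hc : |(1 - ε) * c| = (1 - ε) * |c| := by
    rw [abs_mul, abs_of_nonneg (show 0 ≤ 1 - ε by linarith)]
  linarith [abs_sub_abs_le_abs_sub ((1 - ε) * c) q, abs_sub_comm ((1 - ε) * c) q]

theorem poisoned_population_anticoncentration_general {d : ℕ} (ε σ α : ℝ)
    (hε0 : 0 < ε) (hε1 : ε < 1 / 2) (hσ : 0 < σ)
    (hα2 : (1 - 2 * ε) * α > 1)
    (W : Measure (EuclideanSpace ℝ (Fin d)))
    [IsProbabilityMeasure W]
    (hW2 : MemLp (id : EuclideanSpace ℝ (Fin d) → EuclideanSpace ℝ (Fin d)) 2 W)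
    (μD μW : EuclideanSpace ℝ (Fin d))
    (hWcov : ∀ u : EuclideanSpace ℝ (Fin d), ‖u‖ = 1 →
      ∫ x, ⟪x - μW, u⟫ ^ 2 ∂W ≤ σ ^ 2)
    (Δ μF : EuclideanSpace ℝ (Fin d))
    (hΔ : Δ = μD - μW) (hμF : μF = (1 - ε) • μD + ε • μW)
    (u : EuclideanSpace ℝ (Fin d)) (hu : ‖u‖ = 1)
    (hcorr : |⟪u, Δ⟫| ≥ α * σ / Real.sqrt ε)
    (t : ℝ) (ht : t = ε * |⟪Δ, u⟫| + σ / Real.sqrt ε) :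
    W {x | |⟪x - μF, u⟫| < t} ≤ ENNReal.ofReal (ε / ((1 - 2 * ε) * α - 1) ^ 2) := by
  set r := σ / Real.sqrt ε
  set c := (1 - 2 * ε) * α - 1
  set s := (1 - 2 * ε) * |⟪Δ, u⟫| - r
  have hr : 0 < r := div_pos hσ (Real.sqrt_pos.mpr hε0)
  have hc : 0 < c := sub_pos.mpr hα2
  have hcs : c * r ≤ s := by
    have hαr : α * r ≤ |⟪Δ, u⟫| := by rwa [real_inner_comm, ← mul_div_assoc]
    calc c * r = (1 - 2 * ε) * (α * r) - r := by ring
      _ ≤ s := by unfold s; gcongr; linarith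
  have hsub : {x | |⟪x - μF, u⟫| < t} ⊆ {x | s ≤ |⟪x - μW, u⟫|} := by
    intro x hx
    rw [Set.mem_ofPred_eq, ht, hμF, inner_sub_convexCombination_eq, ← hΔ] at hx
    exact (sub_lt_abs_of_abs_sub_mul_lt (by linarith) hx).le
  have hint : Integrable (fun x => ⟪x - μW, u⟫ ^ 2) W :=
    ((hW2.sub (memLp_const μW)).inner_const u).integrable_sq
  calc W {x | |⟪x - μF, u⟫| < t} ≤ W {x | s ≤ |⟪x - μW, u⟫|} := measure_mono hsub
    _ ≤ ENNReal.ofReal ((∫ x, ⟪x - μW, u⟫ ^ 2 ∂W) / s ^ 2) :=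
        meas_ge_le_integral_sq_div_sq hint ((mul_pos hc hr).trans_le hcs)
    _ ≤ ENNReal.ofReal (σ ^ 2 / (c * r) ^ 2) := by gcongr; exact hWcov u hu
    _ = ENNReal.ofReal (ε / c ^ 2) := by
        rw [mul_pow, div_pow, Real.sq_sqrt hε0.le]
        field_simp

/-- Poisoned-population anti-concentration bound in the proof of Lemma 2: if the unit vector
`u` satisfies `|⟨u,Δ⟩| ≥ ασ/√ε`, then with `t = ε|⟨Δ,u⟩| + σ/√ε` we have
`Pr_{X∼W}[|⟨X−μF,u⟩| < t] ≤ ε/((1−2ε)α − 1)²`. -/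
theorem poisoned_population_anticoncentration {d : ℕ} (ε σ α : ℝ)
    (hε0 : 0 < ε) (hε1 : ε < 1 / 2) (hσ : 0 < σ) (hα : 0 < α)
    (hα2 : (1 - 2 * ε) * α > 1)
    (D W : Measure (EuclideanSpace ℝ (Fin d)))
    [IsProbabilityMeasure D] [IsProbabilityMeasure W]
    (hD2 : MemLp (id : EuclideanSpace ℝ (Fin d) → EuclideanSpace ℝ (Fin d)) 2 D)
    (hW2 : MemLp (id : EuclideanSpace ℝ (Fin d) → EuclideanSpace ℝ (Fin d)) 2 W)
    (μD μW : EuclideanSpace ℝ (Fin d))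
    (hμD : μD = (∫ x, x ∂D)) (hμW : μW = (∫ x, x ∂W))
    (hWcov : ∀ u : EuclideanSpace ℝ (Fin d), ‖u‖ = 1 →
      ∫ x, ⟪x - μW, u⟫ ^ 2 ∂W ≤ σ ^ 2)
    (Δ μF : EuclideanSpace ℝ (Fin d))
    (hΔ : Δ = μD - μW) (hμF : μF = (1 - ε) • μD + ε • μW)
    (u : EuclideanSpace ℝ (Fin d)) (hu : ‖u‖ = 1)
    (hcorr : |⟪u, Δ⟫| ≥ α * σ / Real.sqrt ε)
    (t : ℝ) (ht : t = ε * |⟪Δ, u⟫| + σ / Real.sqrt ε) :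
    W {x | |⟪x - μF, u⟫| < t} ≤ ENNReal.ofReal (ε / ((1 - 2 * ε) * α - 1) ^ 2) :=
  poisoned_population_anticoncentration_general ε σ α hε0 hε1 hσ hα2 W hW2 μD μW hWcov Δ μF hΔ hμF u
    hu hcorr t ht
end
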